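/- arXiv:1910.08508 — 2 statements merged into one kernel-verified Lean document; each statement's English description precedes it below -/
import Mathlib

section
/- Let d ≥ 2 be an integer and let (ω_k)_{k∈ℤ^d} be a family of independent real-valued random variables on a probability space (Ω, P). Let η > 0 and κ ∈ (0,1] satisfy P[ω_k ≥ η] ≥ κ for all k ∈ ℤ^d. Then for all q > 0 and α ∈ (0,1) there exists L₀ ∈ ℕ such that for every integer L ≥ L₀ and every odd integer l with (1/2)·(ln(L^α))^{2/3} < l ≤ (ln(L^α))^{2/3}, the event A_{l,L} := {ω : for every j ∈ (lℤ)^d with ‖j‖_∞ < L there exists k ∈ ℤ^d with ‖k − j‖_∞ < l/2 and ω_k ≥ η} satisfies P[A_{l,L}] ≥ 1 − L^{−q}. -/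
/-!
A cube of side `l = 2m + 1` around `j` contains `l^d` lattice sites, so by independence the
probability that `X k < η` at all of them is at most `(1 - κ)^(l^d) ≤ exp (-κ l^d)`. A union
bound over the `(2L + 1)^d` centres `j` costs a factor `exp (2d log L)`. Since `d ≥ 2` and
`l > (α log L)^(2/3) / 2`, the exponent `κ l^d ≥ κ l^2` grows like `(log L)^(4/3)`, which
eventually beats `(2d + q) log L`.
-/

open MeasureTheory ProbabilityTheory Filter

section Asymptotics

lemma one_sub_pow_le_exp_neg_mul {κ : ℝ} (hκ : κ ≤ 1) (N : ℕ) :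
    (1 - κ) ^ N ≤ Real.exp (-(κ * N)) := by
  calc (1 - κ) ^ N ≤ Real.exp (-κ) ^ N :=
        pow_le_pow_left₀ (by linarith) (Real.one_sub_le_exp_neg κ) N
    _ = Real.exp (-(κ * N)) := by rw [← Real.exp_nat_mul]; ring_nf

lemma eventually_mul_le_mul_rpow_two_thirds_sq (C : ℝ) {c : ℝ} (hc : 0 < c) :
    ∀ᶠ s : ℝ in atTop, C * s ≤ c * (s ^ (2 / 3 : ℝ)) ^ 2 := by
  filter_upwards [(tendsto_rpow_atTop (by norm_num : (0 : ℝ) < 1 / 3)).eventually_ge_atTop (C / c),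
    eventually_gt_atTop 0] with s hs hs0
  have hsq : (s ^ (2 / 3 : ℝ)) ^ 2 = s * s ^ (1 / 3 : ℝ) := by
    rw [← Real.rpow_natCast, ← Real.rpow_mul hs0.le, ← Real.rpow_one_add' hs0.le (by norm_num)]
    norm_num
  rw [hsq]
  nlinarith [(div_le_iff₀ hc).1 hs]

lemma eventually_two_mul_add_one_pow_mul_one_sub_pow_le {d : ℕ} (hd : 2 ≤ d) (q : ℝ) {α κ : ℝ}
    (hα : 0 < α) (hκ0 : 0 < κ) (hκ1 : κ ≤ 1) :
    ∀ᶠ L : ℕ in atTop, ∀ n : ℕ, (1 / 2) * Real.log ((L : ℝ) ^ α) ^ (2 / 3 : ℝ) < n →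
      (2 * (L : ℝ) + 1) ^ d * (1 - κ) ^ (n ^ d) ≤ (L : ℝ) ^ (-q) := by
  have hlog : Tendsto (fun L : ℕ => Real.log ((L : ℝ) ^ α)) atTop atTop :=
    Real.tendsto_log_atTop.comp ((tendsto_rpow_atTop hα).comp tendsto_natCast_atTop_atTop)
  filter_upwards [hlog.eventually (eventually_mul_le_mul_rpow_two_thirds_sq ((2 * d + q) / α)
    (by positivity : 0 < κ / 4)), eventually_ge_atTop 3] with L hL hL3 n hn
  have hL3' : (3 : ℝ) ≤ L := by exact_mod_cast hL3
  have hL0 : (0 : ℝ) < L := by linarith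
  rw [Real.log_rpow hL0] at hL hn
  set t := Real.log L with ht
  have hn1 : 1 ≤ n := by
    have : (0 : ℝ) < n := lt_of_le_of_lt (by positivity) hn
    exact_mod_cast this
  have hcount : (2 * (L : ℝ) + 1) ^ d ≤ Real.exp (2 * d * t) := by
    calc (2 * (L : ℝ) + 1) ^ d ≤ ((L : ℝ) ^ 2) ^ d :=
          pow_le_pow_left₀ (by positivity) (by nlinarith) d
      _ = Real.exp (2 * d * t) := by
        rw [← pow_mul, ← Real.exp_log hL0, ← Real.exp_nat_mul, ← ht]; push_cast; ring_nf
  have hexponent : (2 * d + q) * t ≤ κ * (n : ℝ) ^ d := by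
    calc (2 * d + q) * t = (2 * d + q) / α * (α * t) := by field_simp
      _ ≤ κ / 4 * ((α * t) ^ (2 / 3 : ℝ)) ^ 2 := hL
      _ = κ * ((1 / 2) * (α * t) ^ (2 / 3 : ℝ)) ^ 2 := by ring
      _ ≤ κ * (n : ℝ) ^ 2 := by gcongr
      _ ≤ κ * (n : ℝ) ^ d := by gcongr; exact_mod_cast hn1
  calc (2 * (L : ℝ) + 1) ^ d * (1 - κ) ^ (n ^ d)
      ≤ Real.exp (2 * d * t) * Real.exp (-(κ * ((n ^ d : ℕ) : ℝ))) :=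
        mul_le_mul hcount (one_sub_pow_le_exp_neg_mul hκ1 _) (pow_nonneg (by linarith) _)
          (Real.exp_pos _).le
    _ ≤ Real.exp (t * (-q)) := by
        rw [← Real.exp_add]; push_cast; exact Real.exp_le_exp.2 (by linarith)
    _ = (L : ℝ) ^ (-q) := (Real.rpow_def_of_pos hL0 _).symm

end Asymptotics

section LatticeCube

variable {ι : Type*} [Fintype ι] [DecidableEq ι]

/-- The sites of `Λ_{2m+1}(j) ∩ ℤ^ι`. -/
noncomputable def latticeCube (j : ι → ℤ) (m : ℕ) : Finset (ι → ℤ) :=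
  Finset.Icc (fun i => j i - m) (fun i => j i + m)

lemma mem_latticeCube {j k : ι → ℤ} {m : ℕ} : k ∈ latticeCube j m ↔ ∀ i, |k i - j i| ≤ m := by
  simp only [latticeCube, Finset.mem_Icc, abs_le, Pi.le_def]
  exact ⟨fun h i => ⟨by linarith [h.1 i], by linarith [h.2 i]⟩,
    fun h => ⟨fun i => by linarith [h i], fun i => by linarith [h i]⟩⟩

lemma card_latticeCube (j : ι → ℤ) (m : ℕ) :
    (latticeCube j m).card = (2 * m + 1) ^ Fintype.card ι := by
  rw [latticeCube, Pi.card_Icc]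
  simp only [Int.card_Icc]
  have hside (i : ι) : j i + m + 1 - (j i - m) = ((2 * m + 1 : ℕ) : ℤ) := by push_cast; ring
  simp only [hside, Int.toNat_natCast, Finset.prod_const, Finset.card_univ]

lemma compl_setOf_forall_exists_subset_biUnion_biInter {Ω : Type*} (X : (ι → ℤ) → Ω → ℝ) (η : ℝ)
    (L m : ℕ) {l : ℤ} (hml : (m : ℝ) < l / 2) :
    {ω | ∀ j : ι → ℤ, (∀ i, l ∣ j i) → (∀ i, |(j i : ℝ)| < (L : ℝ)) →
        ∃ k : ι → ℤ, (∀ i, |(k i : ℝ) - (j i : ℝ)| < (l : ℝ) / 2) ∧ η ≤ X k ω}ᶜ ⊆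
      ⋃ j ∈ latticeCube 0 L, ⋂ k ∈ latticeCube j m, X k ⁻¹' Set.Iio η := by
  intro ω hω
  simp only [Set.mem_compl_iff, Set.mem_ofPred_eq] at hω
  push Not at hω
  obtain ⟨j, -, hjL, hbad⟩ := hω
  simp only [Set.mem_iUnion, Set.mem_iInter, Set.mem_preimage, Set.mem_Iio]
  refine ⟨j, mem_latticeCube.2 fun i => ?_, fun k hk => hbad k fun i => ?_⟩
  · have := hjL i
    simp only [Pi.zero_apply, sub_zero]
    exact_mod_cast this.le
  · have : |((k i - j i : ℤ) : ℝ)| ≤ m := by exact_mod_cast mem_latticeCube.1 hk i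
    push_cast at this
    linarith

end LatticeCube

section Probability

variable {Ω : Type*} [MeasurableSpace Ω] {P : Measure Ω}

lemma ProbabilityTheory.iIndepFun.measure_biInter_preimage_le {ι β : Type*} [MeasurableSpace β]
    {X : ι → Ω → β} (hX : iIndepFun X P) {t : Set β} (ht : MeasurableSet t) {p : ENNReal}
    (hp : ∀ k, P (X k ⁻¹' t) ≤ p) (s : Finset ι) : P (⋂ k ∈ s, X k ⁻¹' t) ≤ p ^ s.card := by
  rw [hX.meas_biInter fun k _ => ⟨t, ht, rfl⟩]
  exact Finset.prod_le_pow_card _ _ _ fun k _ => hp k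

lemma measure_preimage_Iio_le_ofReal_one_sub [IsProbabilityMeasure P] {X : Ω → ℝ}
    (hX : Measurable X) {η κ : ℝ} (hκ : 0 ≤ κ) (h : ENNReal.ofReal κ ≤ P {ω | η ≤ X ω}) :
    P (X ⁻¹' Set.Iio η) ≤ ENNReal.ofReal (1 - κ) := by
  have hcompl : X ⁻¹' Set.Iio η = {ω | η ≤ X ω}ᶜ := by ext; simp
  rw [hcompl, prob_compl_eq_one_sub (measurableSet_le measurable_const hX),
    ENNReal.ofReal_sub _ hκ, ENNReal.ofReal_one]
  exact tsub_le_tsub_left h 1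

lemma one_sub_le_measure_of_measure_compl_le [IsProbabilityMeasure P] {s : Set Ω} {ε : ENNReal}
    (h : P sᶜ ≤ ε) : 1 - ε ≤ P s := by
  rw [tsub_le_iff_right, ← measure_univ (μ := P), ← Set.union_compl_self s]
  exact (measure_union_le _ _).trans (by gcongr)

end Probability

theorem stmt7_general (d : ℕ) (hd : 2 ≤ d)
    {Ω : Type*} [MeasurableSpace Ω] (P : Measure Ω) [IsProbabilityMeasure P]
    (X : (Fin d → ℤ) → Ω → ℝ) (hmeas : ∀ k, Measurable (X k))
    (hindep : iIndepFun X P)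
    (η κ : ℝ) (hκ0 : 0 < κ) (hκ1 : κ ≤ 1)
    (hlow : ∀ k, ENNReal.ofReal κ ≤ P {ω | η ≤ X k ω}) :
    ∀ q : ℝ, 0 < q → ∀ α : ℝ, 0 < α → α < 1 →
      ∃ L₀ : ℕ, ∀ L : ℕ, L₀ ≤ L → ∀ l : ℤ, Odd l →
        (1 / 2) * (Real.log ((L : ℝ) ^ α)) ^ ((2 : ℝ) / 3) < (l : ℝ) →
        (l : ℝ) ≤ (Real.log ((L : ℝ) ^ α)) ^ ((2 : ℝ) / 3) →
        1 - ENNReal.ofReal ((L : ℝ) ^ (-q)) ≤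
          P {ω | ∀ j : Fin d → ℤ, (∀ i, l ∣ j i) → (∀ i, |(j i : ℝ)| < (L : ℝ)) →
              ∃ k : Fin d → ℤ,
                (∀ i, |(k i : ℝ) - (j i : ℝ)| < (l : ℝ) / 2) ∧ η ≤ X k ω} := by
  intro q _ α hα _
  obtain ⟨L₀, hL₀⟩ := eventually_atTop.1
    ((eventually_two_mul_add_one_pow_mul_one_sub_pow_le hd q hα hκ0 hκ1).and
      (eventually_ge_atTop 1))
  refine ⟨L₀, fun L hL l hl hl_lower _ => ?_⟩
  obtain ⟨hbound, hL1⟩ := hL₀ L hL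
  have hlog_nonneg : 0 ≤ Real.log ((L : ℝ) ^ α) :=
    Real.log_nonneg (Real.one_le_rpow (by exact_mod_cast hL1) hα.le)
  obtain ⟨m, rfl⟩ := hl
  have hl_pos : (0 : ℤ) < 2 * m + 1 := by
    have : (0 : ℝ) < (2 * m + 1 : ℤ) := lt_of_le_of_lt (by positivity) hl_lower
    exact_mod_cast this
  lift m to ℕ using by omega
  have hbad : ∀ k, P (X k ⁻¹' Set.Iio η) ≤ ENNReal.ofReal (1 - κ) := fun k =>
    measure_preimage_Iio_le_ofReal_one_sub (hmeas k) hκ0.le (hlow k)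
  apply one_sub_le_measure_of_measure_compl_le
  calc _ ≤ P (⋃ j ∈ latticeCube 0 L, ⋂ k ∈ latticeCube j m, X k ⁻¹' Set.Iio η) :=
        measure_mono <|
          compl_setOf_forall_exists_subset_biUnion_biInter X η L m (by push_cast; linarith)
    _ ≤ ∑ j ∈ latticeCube 0 L, ENNReal.ofReal (1 - κ) ^ (latticeCube j m).card :=
        (measure_biUnion_finset_le _ _).trans <| Finset.sum_le_sum fun j _ =>
          hindep.measure_biInter_preimage_le measurableSet_Iio hbad _
    _ = ENNReal.ofReal ((2 * (L : ℝ) + 1) ^ d * (1 - κ) ^ ((2 * m + 1) ^ d)) := by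
        simp only [card_latticeCube, Finset.sum_const, Fintype.card_fin, nsmul_eq_mul]
        rw [ENNReal.ofReal_mul (by positivity), ← ENNReal.ofReal_pow (by linarith)]
        norm_cast
    _ ≤ ENNReal.ofReal ((L : ℝ) ^ (-q)) :=
        ENNReal.ofReal_le_ofReal (hbound _ (by push_cast at hl_lower ⊢; exact hl_lower))

/-- Large-deviation estimate: for `d ≥ 2` and independent `(X k)_{k ∈ ℤ^d}` with
`P[X k ≥ η] ≥ κ`, the event that every cube `Λ_l(j)`, `j ∈ (lℤ)^d ∩ Λ_{2L}`,
contains a site `k` with `X k ≥ η` has probability at least `1 - L^{-q}`. -/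
theorem stmt7 (d : ℕ) (hd : 2 ≤ d)
    {Ω : Type*} [MeasurableSpace Ω] (P : Measure Ω) [IsProbabilityMeasure P]
    (X : (Fin d → ℤ) → Ω → ℝ) (hmeas : ∀ k, Measurable (X k))
    (hindep : iIndepFun X P)
    (η κ : ℝ) (hη : 0 < η) (hκ0 : 0 < κ) (hκ1 : κ ≤ 1)
    (hlow : ∀ k, ENNReal.ofReal κ ≤ P {ω | η ≤ X k ω}) :
    ∀ q : ℝ, 0 < q → ∀ α : ℝ, 0 < α → α < 1 →
      ∃ L₀ : ℕ, ∀ L : ℕ, L₀ ≤ L → ∀ l : ℤ, Odd l →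
        (1 / 2) * (Real.log ((L : ℝ) ^ α)) ^ ((2 : ℝ) / 3) < (l : ℝ) →
        (l : ℝ) ≤ (Real.log ((L : ℝ) ^ α)) ^ ((2 : ℝ) / 3) →
        1 - ENNReal.ofReal ((L : ℝ) ^ (-q)) ≤
          P {ω | ∀ j : Fin d → ℤ, (∀ i, l ∣ j i) → (∀ i, |(j i : ℝ)| < (L : ℝ)) →
              ∃ k : Fin d → ℤ,
                (∀ i, |(k i : ℝ) - (j i : ℝ)| < (l : ℝ) / 2) ∧ η ≤ X k ω} :=
  stmt7_general d hd P X hmeas hindep η κ hκ0 hκ1 hlow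
end

section
/- Let d ≥ 2 be an integer, c > 0, η > 0, κ ∈ (0,1], δ ∈ (0, 1/2]. For each k ∈ ℤ^d let u_k : ℝ^d → [0,∞) be measurable and x_k ∈ ℝ^d be such that B_δ(x_k) ⊆ Λ_1(k) and u_k(x) ≥ c for all x ∈ B_δ(x_k). Let (ω_k)_{k∈ℤ^d} be a family of independent random variables on a probability space (Ω, P), taking values in [0,1] almost surely, with P[ω_k ≥ η] ≥ κ for all k ∈ ℤ^d, and set V_ω(x) := Σ_{k∈ℤ^d} ω_k u_k(x). Then for all q > 0 and α ∈ (0,1) there exists L₀ ∈ ℕ such that for every integer L ≥ L₀, with probability at least 1 − L^{−q} the following holds: there exist an odd integer l with 1 ≤ l ≤ L and points (y_j), indexed by j ∈ (lℤ)^d with ‖j‖_∞ < L, such that B_δ(y_j) ⊆ Λ_l(j) for every such j, η·c·exp(−l^{7/5}) ≥ L^{−α}, and V_ω(x) ≥ η·c for every x in the union of the balls B_δ(y_j). -/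
/-!
Take the odd scale `l = 2m + 1` with `m = ⌈(log L)^{2/3}⌉`. Then `l^{7/5} ≍ (log L)^{14/15}` is
`o(log L)`, so `η c exp(-l^{7/5}) ≥ L^{-α}` for large `L`, while each cube of side `l` contains
`l^d ≥ l^2 ≳ (log L)^{4/3}` sites. The probability that all of them have `ω_k < η` is at most
`(1 - κ)^{l^d} ≤ exp(-κ (log L)^{4/3})`, which beats the `O(L^d)` cubes centred in `Λ_{2L}` and
the target `L^{-q}`. Outside this bad event every such cube contains a site `k` with `ω_k ≥ η`,
and the ball `B_δ(x_k) ⊆ Λ_1(k) ⊆ Λ_l(j)`, on which `V_ω ≥ ω_k u_k ≥ η c`, serves as the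
ball for `j`.
-/

open MeasureTheory ProbabilityTheory
open scoped ENNReal

open Filter Real

section Cube

variable {ι : Type*} [Fintype ι] [DecidableEq ι]

/-- The lattice points of `Λ_{2m+1}(j)`. -/
noncomputable def cube (j : ι → ℤ) (m : ℕ) : Finset (ι → ℤ) :=
  Fintype.piFinset fun i => Finset.Icc (j i - m) (j i + m)

lemma mem_cube {j k : ι → ℤ} {m : ℕ} : k ∈ cube j m ↔ ∀ i, |k i - j i| ≤ m := by
  simp only [cube, Fintype.mem_piFinset, Finset.mem_Icc, abs_le]
  exact forall_congr' fun i => by constructor <;> rintro ⟨h₁, h₂⟩ <;> constructor <;> linarith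

lemma card_cube (j : ι → ℤ) (m : ℕ) : (cube j m).card = (2 * m + 1) ^ Fintype.card ι := by
  have hside (i : ι) : (j i + m + 1 - (j i - m)).toNat = 2 * m + 1 := by omega
  simp only [cube, Fintype.card_piFinset, Int.card_Icc, hside, Finset.prod_const, Finset.card_univ]

lemma card_cube_zero_le {L : ℕ} (hL : 1 ≤ L) :
    ((cube (0 : ι → ℤ) L).card : ℝ) ≤ (3 * L) ^ Fintype.card ι := by
  rw [card_cube]
  push_cast
  gcongr
  linarith [(Nat.one_le_cast.2 hL : (1 : ℝ) ≤ L)]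

lemma mem_cube_zero_of_abs_lt {j : ι → ℤ} {L : ℕ} (hj : ∀ i, |(j i : ℝ)| < L) :
    j ∈ cube 0 L :=
  mem_cube.2 fun i => by rw [Pi.zero_apply, sub_zero]; exact_mod_cast (hj i).le

lemma setOf_abs_sub_lt_half_subset_of_mem_cube {j k : ι → ℤ} {m : ℕ} (hk : k ∈ cube j m) :
    {x : EuclideanSpace ℝ ι | ∀ i, |x i - k i| < 1 / 2} ⊆
      {x | ∀ i, |x i - j i| < ((2 * m + 1 : ℕ) : ℝ) / 2} := by
  intro x hx i
  have hki : |(k i : ℝ) - j i| ≤ m := by exact_mod_cast mem_cube.1 hk i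
  calc |x i - j i| ≤ |x i - k i| + |(k i : ℝ) - j i| := abs_sub_le _ _ _
    _ < 1 / 2 + m := add_lt_add_of_lt_of_le (hx i) hki
    _ = ((2 * m + 1 : ℕ) : ℝ) / 2 := by push_cast; ring

lemma exists_centers_of_forall_exists_mem_cube {δ η c : ℝ} (hη : 0 ≤ η) (hc : 0 ≤ c)
    {u : (ι → ℤ) → EuclideanSpace ℝ ι → ℝ} {xc : (ι → ℤ) → EuclideanSpace ℝ ι}
    (hball : ∀ k, Metric.ball (xc k) δ ⊆ {x | ∀ i, |x i - k i| < 1 / 2})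
    (huc : ∀ k, ∀ x ∈ Metric.ball (xc k) δ, c ≤ u k x)
    {ξ : (ι → ℤ) → ℝ} {J : Finset (ι → ℤ)} {m : ℕ} (hξ : ∀ j ∈ J, ∃ k ∈ cube j m, η ≤ ξ k) :
    ∃ y : (ι → ℤ) → EuclideanSpace ℝ ι, ∀ j ∈ J,
      Metric.ball (y j) δ ⊆ {x | ∀ i, |x i - j i| < ((2 * m + 1 : ℕ) : ℝ) / 2} ∧
      ∀ x ∈ Metric.ball (y j) δ, ENNReal.ofReal (η * c) ≤ ∑' k, ENNReal.ofReal (ξ k * u k x) := by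
  choose! k hk hξk using hξ
  refine ⟨xc ∘ k, fun j hj => ⟨(hball (k j)).trans
    (setOf_abs_sub_lt_half_subset_of_mem_cube (hk j hj)), fun x hx => ?_⟩⟩
  calc ENNReal.ofReal (η * c) ≤ ENNReal.ofReal (ξ (k j) * u (k j) x) :=
        ENNReal.ofReal_le_ofReal
          (mul_le_mul (hξk j hj) (huc (k j) x hx) hc (hη.trans (hξk j hj)))
    _ ≤ ∑' k, ENNReal.ofReal (ξ k * u k x) := ENNReal.le_tsum _

end Cube

section Independence

variable {ι Ω : Type*} [MeasurableSpace Ω] {P : Measure Ω} [IsProbabilityMeasure P]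
  {X : ι → Ω → ℝ} {η κ : ℝ}

lemma measure_forall_lt_le_pow (hmeas : ∀ k, Measurable (X k)) (hindep : iIndepFun X P)
    (hlow : ∀ k, ENNReal.ofReal κ ≤ P {ω | η ≤ X k ω}) (B : Finset ι) :
    P {ω | ∀ k ∈ B, X k ω < η} ≤ (1 - ENNReal.ofReal κ) ^ B.card := by
  have hset : {ω | ∀ k ∈ B, X k ω < η} = ⋂ k ∈ B, X k ⁻¹' Set.Iio η := by ext; simp
  rw [hset, hindep.meas_biInter fun k _ => ⟨Set.Iio η, measurableSet_Iio, rfl⟩]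
  refine (Finset.prod_le_prod' fun k _ => ?_).trans (Finset.prod_const _).le
  have hcompl : X k ⁻¹' Set.Iio η = {ω | η ≤ X k ω}ᶜ := by ext; simp
  rw [hcompl, prob_compl_eq_one_sub (measurableSet_le measurable_const (hmeas k))]
  exact tsub_le_tsub_left (hlow k) 1

lemma one_sub_le_measure_forall_exists {ι' : Type*} (hmeas : ∀ k, Measurable (X k))
    (hindep : iIndepFun X P) (hlow : ∀ k, ENNReal.ofReal κ ≤ P {ω | η ≤ X k ω})
    (hκ0 : 0 ≤ κ) (hκ1 : κ ≤ 1) (J : Finset ι') (B : ι' → Finset ι) {n : ℕ}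
    (hB : ∀ j ∈ J, (B j).card = n) :
    1 - ENNReal.ofReal (J.card * (1 - κ) ^ n) ≤ P {ω | ∀ j ∈ J, ∃ k ∈ B j, η ≤ X k ω} := by
  set good := {ω | ∀ j ∈ J, ∃ k ∈ B j, η ≤ X k ω}
  have hbad : goodᶜ = ⋃ j ∈ J, {ω | ∀ k ∈ B j, X k ω < η} := by ext; simp [good]
  have hbad_le : P goodᶜ ≤ ENNReal.ofReal (J.card * (1 - κ) ^ n) := by
    calc P goodᶜ ≤ ∑ j ∈ J, P {ω | ∀ k ∈ B j, X k ω < η} := hbad ▸ measure_biUnion_finset_le _ _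
      _ ≤ ∑ _j ∈ J, (1 - ENNReal.ofReal κ) ^ n := Finset.sum_le_sum fun j hj =>
          hB j hj ▸ measure_forall_lt_le_pow hmeas hindep hlow (B j)
      _ = ENNReal.ofReal (J.card * (1 - κ) ^ n) := by
          rw [Finset.sum_const, nsmul_eq_mul, ENNReal.ofReal_mul (Nat.cast_nonneg _),
            ENNReal.ofReal_natCast, ENNReal.ofReal_pow (sub_nonneg.2 hκ1),
            ENNReal.ofReal_sub _ hκ0, ENNReal.ofReal_one]
  have hsplit : 1 ≤ P good + P goodᶜ := by
    rw [← measure_univ (μ := P), ← Set.union_compl_self good]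
    exact measure_union_le _ _
  exact tsub_le_iff_right.2 (hsplit.trans (add_le_add_right hbad_le _))

end Independence

lemma eventually_add_mul_rpow_le_mul_rpow (A C : ℝ) {B p q : ℝ} (hB : 0 < B) (hq : 0 < q)
    (hpq : p < q) : ∀ᶠ t : ℝ in atTop, A + C * t ^ p ≤ B * t ^ q := by
  have hA : ∀ᶠ t : ℝ in atTop, A ≤ B / 2 * t ^ q :=
    ((tendsto_rpow_atTop hq).const_mul_atTop (half_pos hB)).eventually_ge_atTop A
  have hC : ∀ᶠ t : ℝ in atTop, C ≤ B / 2 * t ^ (q - p) :=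
    ((tendsto_rpow_atTop (sub_pos.2 hpq)).const_mul_atTop (half_pos hB)).eventually_ge_atTop C
  filter_upwards [hA, hC, eventually_gt_atTop 0] with t hA hC ht
  have hCt : C * t ^ p ≤ B / 2 * t ^ q :=
    calc C * t ^ p ≤ B / 2 * t ^ (q - p) * t ^ p := by gcongr
      _ = B / 2 * t ^ q := by rw [mul_assoc, ← rpow_add ht, sub_add_cancel]
  linarith

section Scale

noncomputable def scaleRadius (t : ℝ) : ℕ := ⌈t ^ ((2 : ℝ) / 3)⌉₊

lemma rpow_two_thirds_le_scale (t : ℝ) :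
    t ^ ((2 : ℝ) / 3) ≤ ((2 * scaleRadius t + 1 : ℕ) : ℝ) := by
  have := Nat.le_ceil (t ^ ((2 : ℝ) / 3))
  push_cast [scaleRadius]
  linarith [(Nat.cast_nonneg _ : (0 : ℝ) ≤ ⌈t ^ ((2 : ℝ) / 3)⌉₊)]

lemma scale_le_five_mul_rpow {t : ℝ} (ht : 1 ≤ t) :
    ((2 * scaleRadius t + 1 : ℕ) : ℝ) ≤ 5 * t ^ ((2 : ℝ) / 3) := by
  have hone : 1 ≤ t ^ ((2 : ℝ) / 3) := one_le_rpow ht (by norm_num)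
  have := Nat.ceil_lt_add_one (zero_le_one.trans hone)
  push_cast [scaleRadius]
  linarith

lemma eventually_scale_le_self : ∀ᶠ t : ℝ in atTop, ((2 * scaleRadius t + 1 : ℕ) : ℝ) ≤ t := by
  filter_upwards [eventually_add_mul_rpow_le_mul_rpow 0 5 one_pos one_pos
    (by norm_num : (2 : ℝ) / 3 < 1), eventually_ge_atTop 1] with t h ht
  rw [rpow_one] at h
  linarith [scale_le_five_mul_rpow ht]

lemma eventually_scale_rpow_le {α : ℝ} (hα : 0 < α) (a : ℝ) :
    ∀ᶠ t : ℝ in atTop, ((2 * scaleRadius t + 1 : ℕ) : ℝ) ^ ((7 : ℝ) / 5) ≤ α * t + a := by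
  filter_upwards [eventually_add_mul_rpow_le_mul_rpow (-a) (5 ^ ((7 : ℝ) / 5)) hα one_pos
    (by norm_num : (14 : ℝ) / 15 < 1), eventually_ge_atTop 1] with t h ht
  have ht0 : 0 ≤ t := zero_le_one.trans ht
  have hpow :
      (5 * t ^ ((2 : ℝ) / 3)) ^ ((7 : ℝ) / 5) = 5 ^ ((7 : ℝ) / 5) * t ^ ((14 : ℝ) / 15) := by
    rw [mul_rpow (by norm_num) (rpow_nonneg ht0 _), ← rpow_mul ht0]
    norm_num
  have hscale := rpow_le_rpow (Nat.cast_nonneg _) (scale_le_five_mul_rpow ht)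
    (by norm_num : (0 : ℝ) ≤ 7 / 5)
  rw [rpow_one] at h
  linarith

lemma eventually_add_mul_le_mul_scale_pow (A C : ℝ) {κ : ℝ} (hκ : 0 < κ) {d : ℕ} (hd : 2 ≤ d) :
    ∀ᶠ t : ℝ in atTop, A + C * t ≤ κ * ((2 * scaleRadius t + 1 : ℕ) : ℝ) ^ d := by
  filter_upwards [eventually_add_mul_rpow_le_mul_rpow A C hκ (by norm_num : (0 : ℝ) < 4 / 3)
    (by norm_num : (1 : ℝ) < 4 / 3), eventually_ge_atTop 0] with t h ht
  have hsq : t ^ ((4 : ℝ) / 3) = (t ^ ((2 : ℝ) / 3)) ^ 2 := by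
    rw [← rpow_natCast, ← rpow_mul ht]
    norm_num
  have hpow : t ^ ((4 : ℝ) / 3) ≤ ((2 * scaleRadius t + 1 : ℕ) : ℝ) ^ d :=
    calc t ^ ((4 : ℝ) / 3) ≤ ((2 * scaleRadius t + 1 : ℕ) : ℝ) ^ 2 := by
          rw [hsq]
          exact pow_le_pow_left₀ (rpow_nonneg ht _) (rpow_two_thirds_le_scale t) 2
      _ ≤ ((2 * scaleRadius t + 1 : ℕ) : ℝ) ^ d :=
          pow_le_pow_right₀ (by exact_mod_cast Nat.le_add_left 1 _) hd
  rw [rpow_one] at h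
  exact h.trans (mul_le_mul_of_nonneg_left hpow hκ.le)

end Scale

lemma rpow_neg_le_mul_exp_neg {L a α s : ℝ} (hL : 0 < L) (ha : 0 < a)
    (h : s ≤ α * log L + log a) : L ^ (-α) ≤ a * exp (-s) :=
  calc L ^ (-α) = exp (log L * -α) := rpow_def_of_pos hL _
    _ ≤ exp (log a + -s) := exp_le_exp.2 (by linarith)
    _ = a * exp (-s) := by rw [exp_add, exp_log ha]

lemma mul_one_sub_pow_le_rpow_neg {L κ q : ℝ} {d n : ℕ} (hL : 0 < L) (hκ : κ ≤ 1)
    (h : d * (log 3 + log L) + q * log L ≤ κ * n) : (3 * L) ^ d * (1 - κ) ^ n ≤ L ^ (-q) := by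
  have hdecay : (1 - κ) ^ n ≤ exp (-(κ * n)) := by
    rw [show -(κ * n) = n * -κ by ring, exp_nat_mul]
    exact pow_le_pow_left₀ (sub_nonneg.2 hκ) (one_sub_le_exp_neg κ) n
  have hcount : (3 * L) ^ d = exp (d * (log 3 + log L)) := by
    rw [← log_mul three_ne_zero hL.ne', exp_nat_mul, exp_log (by positivity)]
  calc (3 * L) ^ d * (1 - κ) ^ n ≤ exp (d * (log 3 + log L)) * exp (-(κ * n)) := by
        rw [hcount]; gcongr
    _ ≤ exp (log L * -q) := by rw [← exp_add]; exact exp_le_exp.2 (by linarith)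
    _ = L ^ (-q) := (rpow_def_of_pos hL _).symm

lemma eventually_scale_admissible {d : ℕ} (hd : 2 ≤ d) {a κ q α : ℝ} (ha : 0 < a) (hκ0 : 0 < κ)
    (hκ1 : κ ≤ 1) (hα : 0 < α) :
    ∀ᶠ L : ℕ in atTop, 1 ≤ L ∧ 2 * scaleRadius (log L) + 1 ≤ L ∧
      (L : ℝ) ^ (-α) ≤ a * exp (-(((2 * scaleRadius (log L) + 1 : ℕ) : ℝ) ^ ((7 : ℝ) / 5))) ∧
      (3 * (L : ℝ)) ^ d * (1 - κ) ^ ((2 * scaleRadius (log L) + 1) ^ d) ≤ (L : ℝ) ^ (-q) := by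
  have hlog : Tendsto (fun L : ℕ => log L) atTop atTop :=
    tendsto_log_atTop.comp tendsto_natCast_atTop_atTop
  filter_upwards [eventually_ge_atTop 1, hlog.eventually eventually_scale_le_self,
    hlog.eventually (eventually_scale_rpow_le hα (log a)),
    hlog.eventually (eventually_add_mul_le_mul_scale_pow (d * log 3) (d + q) hκ0 hd)]
    with L hL1 hle hexp hcount
  have hL : (0 : ℝ) < L := by exact_mod_cast hL1
  refine ⟨hL1, ?_, rpow_neg_le_mul_exp_neg hL ha hexp, mul_one_sub_pow_le_rpow_neg hL hκ1 ?_⟩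
  · exact_mod_cast hle.trans (log_le_self hL.le)
  · push_cast at hcount ⊢
    linear_combination hcount

theorem stmt11_general (d : ℕ) (hd : 2 ≤ d) (c η κ δ : ℝ) (hc : 0 < c) (hη : 0 < η)
    (hκ0 : 0 < κ) (hκ1 : κ ≤ 1)
    (u : (Fin d → ℤ) → EuclideanSpace ℝ (Fin d) → ℝ)
    (xc : (Fin d → ℤ) → EuclideanSpace ℝ (Fin d))
    (hball : ∀ k : Fin d → ℤ,
      Metric.ball (xc k) δ ⊆ {x : EuclideanSpace ℝ (Fin d) | ∀ i, |x i - (k i : ℝ)| < 1 / 2})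
    (huc : ∀ k : Fin d → ℤ, ∀ x ∈ Metric.ball (xc k) δ, c ≤ u k x)
    {Ω : Type*} [MeasurableSpace Ω] (P : Measure Ω) [IsProbabilityMeasure P]
    (X : (Fin d → ℤ) → Ω → ℝ) (hmeas : ∀ k, Measurable (X k))
    (hindep : iIndepFun X P)
    (hlow : ∀ k, ENNReal.ofReal κ ≤ P {ω | η ≤ X k ω}) :
    ∀ q : ℝ, 0 < q → ∀ α : ℝ, 0 < α → α < 1 →
      ∃ L₀ : ℕ, ∀ L : ℕ, L₀ ≤ L →
        1 - ENNReal.ofReal ((L : ℝ) ^ (-q)) ≤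
        P {ω | ∃ l : ℕ, Odd l ∧ 1 ≤ l ∧ l ≤ L ∧
            (L : ℝ) ^ (-α) ≤ η * c * Real.exp (-((l : ℝ) ^ ((7 : ℝ) / 5))) ∧
            ∃ y : (Fin d → ℤ) → EuclideanSpace ℝ (Fin d),
              ∀ j : Fin d → ℤ, (∀ i, (l : ℤ) ∣ j i) → (∀ i, |(j i : ℝ)| < (L : ℝ)) →
                Metric.ball (y j) δ ⊆
                  {x : EuclideanSpace ℝ (Fin d) | ∀ i, |x i - (j i : ℝ)| < (l : ℝ) / 2} ∧
                ∀ x ∈ Metric.ball (y j) δ,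
                  ENNReal.ofReal (η * c) ≤
                    ∑' k : Fin d → ℤ, ENNReal.ofReal (X k ω * u k x)} := by
  intro q _ α hα _
  obtain ⟨L₀, hL₀⟩ := eventually_atTop.1
    (eventually_scale_admissible (q := q) hd (mul_pos hη hc) hκ0 hκ1 hα)
  refine ⟨L₀, fun L hL => ?_⟩
  obtain ⟨hL1, hlL, hexp, hcount⟩ := hL₀ L hL
  set m := scaleRadius (log L)
  have hJ : ((cube (0 : Fin d → ℤ) L).card : ℝ) * (1 - κ) ^ ((2 * m + 1) ^ d) ≤ L ^ (-q) := by
    refine (mul_le_mul_of_nonneg_right ?_ (pow_nonneg (sub_nonneg.2 hκ1) _)).trans hcount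
    simpa using card_cube_zero_le (ι := Fin d) hL1
  refine le_trans ?_ (measure_mono (s := {ω | ∀ j ∈ cube 0 L, ∃ k ∈ cube j m, η ≤ X k ω}) ?_)
  · refine (tsub_le_tsub_left (ENNReal.ofReal_le_ofReal hJ) 1).trans ?_
    exact one_sub_le_measure_forall_exists hmeas hindep hlow hκ0.le hκ1 _ _
      fun j _ => by rw [card_cube, Fintype.card_fin]
  · intro ω hω
    obtain ⟨y, hy⟩ := exists_centers_of_forall_exists_mem_cube hη.le hc.le hball huc hω
    exact ⟨2 * m + 1, odd_two_mul_add_one m, by omega, hlL, hexp, y,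
      fun j _ hj => hy j (mem_cube_zero_of_abs_lt hj)⟩

/-- Probabilistic core of the initial scale estimate: with probability at least
`1 - L^{-q}`, the random potential `V_ω = Σ_k X_k(ω) u_k` exceeds `η c` on an
`(l,δ)`-equidistributed family of `δ`-balls inside `Λ_{2L}`, at an odd scale
`l ≤ L` for which `η c exp(-l^{7/5}) ≥ L^{-α}`. -/
theorem stmt11 (d : ℕ) (hd : 2 ≤ d) (c η κ δ : ℝ) (hc : 0 < c) (hη : 0 < η)
    (hκ0 : 0 < κ) (hκ1 : κ ≤ 1) (hδ0 : 0 < δ) (hδ : δ ≤ 1 / 2)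
    (u : (Fin d → ℤ) → EuclideanSpace ℝ (Fin d) → ℝ)
    (humeas : ∀ k, Measurable (u k)) (hu0 : ∀ k x, 0 ≤ u k x)
    (xc : (Fin d → ℤ) → EuclideanSpace ℝ (Fin d))
    (hball : ∀ k : Fin d → ℤ,
      Metric.ball (xc k) δ ⊆ {x : EuclideanSpace ℝ (Fin d) | ∀ i, |x i - (k i : ℝ)| < 1 / 2})
    (huc : ∀ k : Fin d → ℤ, ∀ x ∈ Metric.ball (xc k) δ, c ≤ u k x)
    {Ω : Type*} [MeasurableSpace Ω] (P : Measure Ω) [IsProbabilityMeasure P]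
    (X : (Fin d → ℤ) → Ω → ℝ) (hmeas : ∀ k, Measurable (X k))
    (hindep : iIndepFun X P)
    (hval : ∀ k, ∀ᵐ ω ∂P, X k ω ∈ Set.Icc (0 : ℝ) 1)
    (hlow : ∀ k, ENNReal.ofReal κ ≤ P {ω | η ≤ X k ω}) :
    ∀ q : ℝ, 0 < q → ∀ α : ℝ, 0 < α → α < 1 →
      ∃ L₀ : ℕ, ∀ L : ℕ, L₀ ≤ L →
        1 - ENNReal.ofReal ((L : ℝ) ^ (-q)) ≤
        P {ω | ∃ l : ℕ, Odd l ∧ 1 ≤ l ∧ l ≤ L ∧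
            (L : ℝ) ^ (-α) ≤ η * c * Real.exp (-((l : ℝ) ^ ((7 : ℝ) / 5))) ∧
            ∃ y : (Fin d → ℤ) → EuclideanSpace ℝ (Fin d),
              ∀ j : Fin d → ℤ, (∀ i, (l : ℤ) ∣ j i) → (∀ i, |(j i : ℝ)| < (L : ℝ)) →
                Metric.ball (y j) δ ⊆
                  {x : EuclideanSpace ℝ (Fin d) | ∀ i, |x i - (j i : ℝ)| < (l : ℝ) / 2} ∧
                ∀ x ∈ Metric.ball (y j) δ,
                  ENNReal.ofReal (η * c) ≤
                    ∑' k : Fin d → ℤ, ENNReal.ofReal (X k ω * u k x)} :=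
  stmt11_general d hd c η κ δ hc hη hκ0 hκ1 u xc hball huc P X hmeas hindep hlow
end
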